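/- arXiv:2604.15843 — 7 statements merged into one kernel-verified Lean document; each statement's English description precedes it below -/
import Mathlib

section
/- Let X be a separable metric space equipped with a countable family of continuous finitary operations: a countable index type ι, arities n : ι → ℕ, and for each i a continuous map ω_i : (Fin (n i) → X) → X (where Fin (n i) → X carries the product topology). Let (F_m) be a sequence of nonempty closed subsets of X, each closed under every operation (for all i and all v : Fin (n i) → X with v j ∈ F_m for all j, one has ω_i v ∈ F_m), converging in the Wijsman sense to a nonempty closed subset F. Then F is closed under every operation ω_i. -/
/-!
A point `x` lies in the Wijsman limit `Fl` exactly when `infDist x (F m) → 0`, i.e. when `x` is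
the limit of points `u m ∈ F m`. Applying a continuous operation coordinatewise to such
approximating sequences yields points of `F m` converging to its value, so this set of
limit points is closed under every operation.
-/

open Metric Filter Topology

namespace Metric

variable {X : Type*} [PseudoMetricSpace X]

/-- In a metric space this is the Kuratowski lower limit of the sequence `F`. -/
def lowerLimit (F : ℕ → Set X) : Set X :=
  {x | Tendsto (fun m => infDist x (F m)) atTop (𝓝 0)}

theorem exists_tendsto_of_mem_lowerLimit {F : ℕ → Set X} (hF : ∀ m, (F m).Nonempty) {x : X}
    (hx : x ∈ lowerLimit F) : ∃ u : ℕ → X, (∀ m, u m ∈ F m) ∧ Tendsto u atTop (𝓝 x) := by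
  have hclose : ∀ m, ∃ y ∈ F m, dist x y < infDist x (F m) + 1 / (m + 1) := fun m =>
    (infDist_lt_iff (hF m)).1 (lt_add_of_pos_right _ Nat.one_div_pos_of_nat)
  choose u hu hdist using hclose
  refine ⟨u, hu, tendsto_iff_dist_tendsto_zero.2 ?_⟩
  have hbound : Tendsto (fun m : ℕ => infDist x (F m) + 1 / ((m : ℝ) + 1)) atTop (𝓝 0) := by
    simpa using hx.add tendsto_one_div_add_atTop_nhds_zero_nat
  exact squeeze_zero (fun _ => dist_nonneg) (fun m => (dist_comm (u m) x).trans_le (hdist m).le)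
    hbound

theorem mem_lowerLimit_of_tendsto {F : ℕ → Set X} {u : ℕ → X} (hu : ∀ m, u m ∈ F m) {x : X}
    (hux : Tendsto u atTop (𝓝 x)) : x ∈ lowerLimit F := by
  refine squeeze_zero (fun _ => infDist_nonneg) (fun m => infDist_le_dist_of_mem (hu m)) ?_
  simpa only [dist_comm] using tendsto_iff_dist_tendsto_zero.1 hux

theorem map_mem_lowerLimit {F : ℕ → Set X} (hF : ∀ m, (F m).Nonempty) {κ : Type*}
    {ω : (κ → X) → X} (hω : Continuous ω) (hFω : ∀ m, ∀ v : κ → X, (∀ j, v j ∈ F m) → ω v ∈ F m)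
    {v : κ → X} (hv : ∀ j, v j ∈ lowerLimit F) : ω v ∈ lowerLimit F := by
  choose u hu hlim using fun j => exists_tendsto_of_mem_lowerLimit hF (hv j)
  have hcoord : Tendsto (fun m j => u j m) atTop (𝓝 v) := tendsto_pi_nhds.2 hlim
  exact mem_lowerLimit_of_tendsto (fun m => hFω m _ fun j => hu j m)
    ((hω.tendsto v).comp hcoord)

theorem lowerLimit_eq_of_tendsto_infDist {F : ℕ → Set X} {Fl : Set X} (hFlne : Fl.Nonempty)
    (hFlcl : IsClosed Fl)
    (hW : ∀ y : X, Tendsto (fun m => infDist y (F m)) atTop (𝓝 (infDist y Fl))) :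
    lowerLimit F = Fl := by
  ext x
  rw [hFlcl.mem_iff_infDist_zero hFlne]
  exact ⟨fun hx => tendsto_nhds_unique (hW x) hx, fun hx => show Tendsto _ _ _ from hx ▸ hW x⟩

end Metric

theorem wijsman_limit_substructure_general {X : Type*} [MetricSpace X]
    {ι : Type*} (n : ι → ℕ) (ω : ∀ i, (Fin (n i) → X) → X)
    (hω : ∀ i, Continuous (ω i))
    (F : ℕ → Set X) (Fl : Set X)
    (hFne : ∀ m, (F m).Nonempty)
    (hFop : ∀ m, ∀ i, ∀ v : Fin (n i) → X, (∀ j, v j ∈ F m) → ω i v ∈ F m)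
    (hFlne : Fl.Nonempty) (hFlcl : IsClosed Fl)
    (hW : ∀ y : X,
      Tendsto (fun m => infDist y (F m)) atTop (𝓝 (infDist y Fl))) :
    ∀ i, ∀ v : Fin (n i) → X, (∀ j, v j ∈ Fl) → ω i v ∈ Fl := by
  intro i v hv
  rw [← lowerLimit_eq_of_tendsto_infDist hFlne hFlcl hW] at hv ⊢
  exact map_mem_lowerLimit hFne (hω i) (fun m => hFop m i) hv

/-- Substructure variant of Wijsman closedness: if each `F m` is a nonempty closed
subset closed under each of countably many continuous finitary operations `ω i`, and
`F m → Fl` in the Wijsman sense with `Fl` nonempty closed, then `Fl` is closed under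
every operation. -/
theorem wijsman_limit_substructure {X : Type*} [MetricSpace X]
    [TopologicalSpace.SeparableSpace X]
    {ι : Type*} [Countable ι] (n : ι → ℕ) (ω : ∀ i, (Fin (n i) → X) → X)
    (hω : ∀ i, Continuous (ω i))
    (F : ℕ → Set X) (Fl : Set X)
    (hFne : ∀ m, (F m).Nonempty) (hFcl : ∀ m, IsClosed (F m))
    (hFop : ∀ m, ∀ i, ∀ v : Fin (n i) → X, (∀ j, v j ∈ F m) → ω i v ∈ F m)
    (hFlne : Fl.Nonempty) (hFlcl : IsClosed Fl)
    (hW : ∀ y : X,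
      Tendsto (fun m => infDist y (F m)) atTop (𝓝 (infDist y Fl))) :
    ∀ i, ∀ v : Fin (n i) → X, (∀ j, v j ∈ Fl) → ω i v ∈ Fl :=
  wijsman_limit_substructure_general n ω hω F Fl hFne hFop hFlne hFlcl hW
end

section
/- Equip Bool with the discrete topology and FreeGroup ℕ → Bool with the product topology. Then the set of all χ : FreeGroup ℕ → Bool such that there exists a normal subgroup N of FreeGroup ℕ with underlying set {g | χ g = true} and with the quotient group FreeGroup ℕ ⧸ N infinite is a Gδ subset of FreeGroup ℕ → Bool. -/
/-!
Being the code of a normal subgroup is a conjunction of conditions on finitely many coordinates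
each, so such codes form a closed, hence `Gδ`, subset of the metrizable cube `G → Bool`. For the
subgroup `N` coded by `χ`, `G ⧸ N` is infinite iff no finite `s ⊆ G` meets every coset, i.e. for
every finite `s` some `g` has `χ (h⁻¹ * g) = false` for all `h ∈ s`: an open condition for each of
the countably many `s`.
-/

open Set

theorem Function.Surjective.infinite_iff_forall_finset_exists {α β : Type*} {f : α → β}
    (hf : Function.Surjective f) :
    Infinite β ↔ ∀ s : Finset α, ∃ a, ∀ b ∈ s, f b ≠ f a := by
  classical
  constructor
  · intro _ s
    obtain ⟨y, hy⟩ := Infinite.exists_notMem_finset (s.image f)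
    obtain ⟨a, rfl⟩ := hf y
    exact ⟨a, fun b hb hba => hy (hba ▸ Finset.mem_image_of_mem f hb)⟩
  · intro h
    by_contra hfin
    have := @Fintype.ofFinite β (not_infinite_iff_finite.mp hfin)
    obtain ⟨a, ha⟩ := h (Finset.univ.image (Function.surjInv hf))
    exact ha _ (Finset.mem_image_of_mem _ (Finset.mem_univ (f a))) (Function.surjInv_eq hf _)

section Codes

variable {G : Type*} [Group G]

theorem exists_normal_subgroup_code_iff (χ : G → Bool) :
    (∃ N : Subgroup G, N.Normal ∧ (N : Set G) = {g | χ g = true}) ↔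
      χ 1 = true ∧ (∀ a b, χ a = true → χ b = true → χ (a * b⁻¹) = true) ∧
        ∀ a b, χ b = true → χ (a * b * a⁻¹) = true := by
  constructor
  · rintro ⟨N, hN, hχ⟩
    have mem : ∀ g, g ∈ N ↔ χ g = true := fun g => Set.ext_iff.mp hχ g
    simp only [← mem]
    exact ⟨N.one_mem, fun a b ha hb => N.mul_mem ha (N.inv_mem hb),
      fun a b hb => hN.conj_mem b hb a⟩
  · rintro ⟨one, div, conj⟩
    exact ⟨Subgroup.ofDiv {g | χ g = true} ⟨1, one⟩ fun a ha b hb => div a b ha hb,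
      ⟨fun b hb a => conj a b hb⟩, rfl⟩

theorem isClosed_setOf_normal_subgroup_code :
    IsClosed {χ : G → Bool | ∃ N : Subgroup G, N.Normal ∧ (N : Set G) = {g | χ g = true}} := by
  simp only [exists_normal_subgroup_code_iff, ofPred_and, ofPred_forall]
  refine .inter ?_ (.inter ?_ ?_)
  · exact (isClosed_discrete {true}).preimage
      (by fun_prop : Continuous fun χ : G → Bool => χ 1)
  · refine isClosed_iInter fun a => isClosed_iInter fun b => ?_
    exact (isClosed_discrete
        {p : Bool × Bool × Bool | p.1 = true → p.2.1 = true → p.2.2 = true}).preimage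
      (by fun_prop : Continuous fun χ : G → Bool => (χ a, χ b, χ (a * b⁻¹)))
  · refine isClosed_iInter fun a => isClosed_iInter fun b => ?_
    exact (isClosed_discrete {p : Bool × Bool | p.1 = true → p.2 = true}).preimage
      (by fun_prop : Continuous fun χ : G → Bool => (χ b, χ (a * b * a⁻¹)))

theorem infinite_quotient_iff_of_code {N : Subgroup G} {χ : G → Bool}
    (hχ : (N : Set G) = {g | χ g = true}) :
    Infinite (G ⧸ N) ↔ ∀ s : Finset G, ∃ g, ∀ h ∈ s, χ (h⁻¹ * g) = false := by
  have mem : ∀ g, g ∈ N ↔ χ g = true := fun g => Set.ext_iff.mp hχ g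
  simp only [(QuotientGroup.mk_surjective (s := N)).infinite_iff_forall_finset_exists, ne_eq,
    QuotientGroup.eq, mem, Bool.not_eq_true]

theorem isOpen_setOf_exists_forall_apply_eq_false (s : Finset G) :
    IsOpen {χ : G → Bool | ∃ g, ∀ h ∈ s, χ (h⁻¹ * g) = false} := by
  simp only [ofPred_exists, ofPred_forall]
  exact isOpen_iUnion fun g => isOpen_biInter_finset fun h _ =>
    (isOpen_discrete {false}).preimage (by fun_prop : Continuous fun χ : G → Bool => χ (h⁻¹ * g))

theorem isGδ_setOf_normal_subgroup_code_infinite_quotient [Countable G] :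
    IsGδ {χ : G → Bool | ∃ N : Subgroup G, N.Normal ∧ (N : Set G) = {g | χ g = true} ∧
      Infinite (G ⧸ N)} := by
  have codes : {χ : G → Bool | ∃ N : Subgroup G, N.Normal ∧ (N : Set G) = {g | χ g = true} ∧
      Infinite (G ⧸ N)} =
      {χ | ∃ N : Subgroup G, N.Normal ∧ (N : Set G) = {g | χ g = true}} ∩
        ⋂ s : Finset G, {χ | ∃ g, ∀ h ∈ s, χ (h⁻¹ * g) = false} := by
    ext χ
    simp only [mem_ofPred_eq, mem_inter_iff, mem_iInter]
    constructor
    · rintro ⟨N, hN, hχ, hinf⟩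
      exact ⟨⟨N, hN, hχ⟩, (infinite_quotient_iff_of_code hχ).mp hinf⟩
    · rintro ⟨⟨N, hN, hχ⟩, hcosets⟩
      exact ⟨N, hN, hχ, (infinite_quotient_iff_of_code hχ).mpr hcosets⟩
  rw [codes]
  exact isClosed_setOf_normal_subgroup_code.isGδ.inter
    (.iInter_of_isOpen isOpen_setOf_exists_forall_apply_eq_false)

end Codes

/-- The set of codes of normal subgroups of `FreeGroup ℕ` with infinite quotient is a
`Gδ` subset of the Cantor cube `FreeGroup ℕ → Bool`. -/
theorem isGdelta_infinite_quotient_codes :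
    IsGδ {χ : FreeGroup ℕ → Bool |
      ∃ N : Subgroup (FreeGroup ℕ), N.Normal ∧
        (N : Set (FreeGroup ℕ)) = {g : FreeGroup ℕ | χ g = true} ∧
        Infinite (FreeGroup ℕ ⧸ N)} :=
  isGδ_setOf_normal_subgroup_code_infinite_quotient
end

section
/- Equip Bool with the discrete topology and FreeGroup ℕ → Bool with the product topology. Then the set of all χ : FreeGroup ℕ → Bool such that there exists a normal subgroup N of FreeGroup ℕ with underlying set {g | χ g = true} and with the quotient group FreeGroup ℕ ⧸ N sofic is a Gδ subset of FreeGroup ℕ → Bool. -/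
/-- Normalized Hamming distance between two maps `Fin d → Fin d`. -/
noncomputable def normHammingDist {d : ℕ} (π τ : Fin d → Fin d) : ℝ :=
  ((Finset.univ.filter fun i => π i ≠ τ i).card : ℝ) / d

/-- A group `G` is sofic if every finite subset admits, for every `ε > 0`,
an `(F, ε)`-approximation by permutations of a finite set. -/
def IsSofic (G : Type*) [Group G] : Prop :=
  ∀ (F : Finset G) (ε : ℝ), 0 < ε →
    ∃ d : ℕ, 1 ≤ d ∧ ∃ σ : G → Equiv.Perm (Fin d),
      ((1 : G) ∈ F → σ 1 = Equiv.refl (Fin d)) ∧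
      (∀ u ∈ F, ∀ v ∈ F, ∀ w ∈ F, u * v = w →
        normHammingDist (fun i => σ u (σ v i)) (σ w) < ε) ∧
      (∀ u ∈ F, ∀ v ∈ F, u ≠ v →
        1 - ε < normHammingDist (σ u) (σ v))

/-!
Being the code of a normal subgroup `N` is a closed condition on `χ`. For such a code, soficity
of `G ⧸ N` can be tested on lifts `E ⊆ G` of finite subsets of the quotient, where the relations
`u = 1`, `u * v = w` and `u ≠ v` in `G ⧸ N` are read off from finitely many values of `χ`. Hence,
for fixed `d` and `τ`, an `(E, ε)`-approximation is an open condition on `χ`, and soficity is the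
intersection over the countably many pairs `(E, 1 / (n + 1))` of these open conditions.
-/

open Set

section Topology

variable {X ι Y : Type*} [TopologicalSpace X] [TopologicalSpace Y] [DiscreteTopology Y]

theorem isOpen_setOf_forall_finset_mem {s : Finset ι} {p : ι → X → Prop}
    (h : ∀ i ∈ s, IsOpen {x | p i x}) : IsOpen {x | ∀ i ∈ s, p i x} := by
  have hs : {x | ∀ i ∈ s, p i x} = ⋂ i ∈ s, {x | p i x} := by ext; simp
  exact hs ▸ isOpen_biInter_finset h

theorem isClopen_setOf_apply_eq (i : ι) (y : Y) : IsClopen {f : ι → Y | f i = y} :=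
  (isClopen_discrete {y}).preimage (continuous_apply i)

theorem isOpen_setOf_apply_eq_imp (i : ι) (y : Y) (P : Prop) :
    IsOpen {f : ι → Y | f i = y → P} :=
  (isOpen_discrete {z : Y | z = y → P}).preimage (continuous_apply (A := fun _ => Y) i)

end Topology

variable {G : Type*} [Group G]

/-- An `(E, ε)`-approximation of `G ⧸ N` lifted to `G`, where `χ` codes `N`: the relations
`u = 1`, `u * v = w` and `u ≠ v` in `G ⧸ N` become `χ u = true`, `χ (u * v * w⁻¹) = true` and
`χ (u * v⁻¹) = false`. -/
def IsSoficApproxOn (χ : G → Bool) (E : Finset G) (ε : ℝ) {d : ℕ}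
    (τ : G → Equiv.Perm (Fin d)) : Prop :=
  (∀ u ∈ E, χ u = true → τ u = Equiv.refl (Fin d)) ∧
  (∀ u ∈ E, ∀ v ∈ E, ∀ w ∈ E, χ (u * v * w⁻¹) = true →
    normHammingDist (fun i => τ u (τ v i)) (τ w) < ε) ∧
  (∀ u ∈ E, ∀ v ∈ E, χ (u * v⁻¹) = false → 1 - ε < normHammingDist (τ u) (τ v))

def HasSoficApprox (χ : G → Bool) (E : Finset G) (ε : ℝ) : Prop :=
  ∃ d : ℕ, 1 ≤ d ∧ ∃ τ : G → Equiv.Perm (Fin d), IsSoficApproxOn χ E ε τ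

theorem HasSoficApprox.mono {χ : G → Bool} {E : Finset G} {ε ε' : ℝ}
    (h : HasSoficApprox χ E ε) (hε : ε ≤ ε') : HasSoficApprox χ E ε' := by
  obtain ⟨d, hd, τ, h1, hmul, hsep⟩ := h
  exact ⟨d, hd, τ, h1, fun u hu v hv w hw huvw => (hmul u hu v hv w hw huvw).trans_le hε,
    fun u hu v hv huv => (sub_le_sub_left hε 1).trans_lt (hsep u hu v hv huv)⟩

theorem isOpen_setOf_isSoficApproxOn (E : Finset G) (ε : ℝ) {d : ℕ}
    (τ : G → Equiv.Perm (Fin d)) : IsOpen {χ : G → Bool | IsSoficApproxOn χ E ε τ} :=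
  (isOpen_setOf_forall_finset_mem fun u _ => isOpen_setOf_apply_eq_imp u true _).inter <|
    (isOpen_setOf_forall_finset_mem fun _ _ => isOpen_setOf_forall_finset_mem fun _ _ =>
        isOpen_setOf_forall_finset_mem fun _ _ => isOpen_setOf_apply_eq_imp _ true _).inter <|
      isOpen_setOf_forall_finset_mem fun _ _ => isOpen_setOf_forall_finset_mem fun _ _ =>
        isOpen_setOf_apply_eq_imp _ false _

theorem isOpen_setOf_hasSoficApprox (E : Finset G) (ε : ℝ) :
    IsOpen {χ : G → Bool | HasSoficApprox χ E ε} := by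
  rw [isOpen_iff_forall_mem_open]
  rintro χ ⟨d, hd, τ, hτ⟩
  exact ⟨{χ' | IsSoficApproxOn χ' E ε τ}, fun χ' hχ' => ⟨d, hd, τ, hχ'⟩,
    isOpen_setOf_isSoficApproxOn E ε τ, hτ⟩

section Kernel

variable {Q : Type*} [Group Q] (f : G →* Q) {χ : G → Bool} (hχ : ∀ g, f g = 1 ↔ χ g = true)
include hχ

theorem code_mul_mul_inv_eq_true_iff (u v w : G) : χ (u * v * w⁻¹) = true ↔ f u * f v = f w := by
  rw [← hχ, map_mul, map_mul, map_inv, mul_inv_eq_one]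

theorem code_mul_inv_eq_true_iff (u v : G) : χ (u * v⁻¹) = true ↔ f u = f v := by
  rw [← hχ, map_mul, map_inv, mul_inv_eq_one]

theorem IsSofic.hasSoficApprox (hQ : IsSofic Q) (E : Finset G) {ε : ℝ} (hε : 0 < ε) :
    HasSoficApprox χ E ε := by
  classical
  obtain ⟨d, hd, σ, h1, hmul, hsep⟩ := hQ (E.image f) ε hε
  have hmem {u : G} (hu : u ∈ E) : f u ∈ E.image f := Finset.mem_image_of_mem f hu
  refine ⟨d, hd, fun g => σ (f g), fun u hu hu1 => ?_, fun u hu v hv w hw huvw => ?_,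
    fun u hu v hv huv => ?_⟩
  · have hfu : f u = 1 := (hχ u).2 hu1
    exact (congrArg σ hfu).trans (h1 (hfu ▸ hmem hu))
  · exact hmul _ (hmem hu) _ (hmem hv) _ (hmem hw)
      ((code_mul_mul_inv_eq_true_iff f hχ u v w).1 huvw)
  · refine hsep _ (hmem hu) _ (hmem hv) fun hfuv => ?_
    simp [(code_mul_inv_eq_true_iff f hχ u v).2 hfuv] at huv

theorem isSofic_of_hasSoficApprox (hf : Function.Surjective f)
    (h : ∀ (E : Finset G) (ε : ℝ), 0 < ε → HasSoficApprox χ E ε) : IsSofic Q := by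
  classical
  intro F ε hε
  let s := Function.surjInv hf
  have hs : ∀ q, f (s q) = q := Function.surjInv_eq hf
  have hmem {q : Q} (hq : q ∈ F) : s q ∈ F.image s := Finset.mem_image_of_mem s hq
  obtain ⟨d, hd, τ, h1, hmul, hsep⟩ := h (F.image s) ε hε
  refine ⟨d, hd, fun q => τ (s q), fun h1F => h1 _ (hmem h1F) ((hχ _).1 (hs 1)),
    fun u hu v hv w hw huvw => ?_, fun u hu v hv huv => ?_⟩
  · refine hmul _ (hmem hu) _ (hmem hv) _ (hmem hw) ?_
    rw [code_mul_mul_inv_eq_true_iff f hχ, hs, hs, hs, huvw]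
  · refine hsep _ (hmem hu) _ (hmem hv) ?_
    rw [Bool.eq_false_iff, ne_eq, code_mul_inv_eq_true_iff f hχ, hs, hs]
    exact huv

theorem isSofic_iff_forall_hasSoficApprox (hf : Function.Surjective f) :
    IsSofic Q ↔ ∀ (E : Finset G) (n : ℕ), HasSoficApprox χ E (1 / (n + 1)) := by
  refine ⟨fun hQ E n => hQ.hasSoficApprox f hχ E (by positivity), fun h => ?_⟩
  refine isSofic_of_hasSoficApprox f hχ hf fun E ε hε => ?_
  obtain ⟨n, hn⟩ := exists_nat_one_div_lt hε
  exact (h E n).mono hn.le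

end Kernel

theorem isSofic_quotient_iff_forall_hasSoficApprox {N : Subgroup G} [N.Normal] {χ : G → Bool}
    (hNχ : (N : Set G) = {g | χ g = true}) :
    IsSofic (G ⧸ N) ↔ ∀ (E : Finset G) (n : ℕ), HasSoficApprox χ E (1 / (n + 1)) := by
  refine isSofic_iff_forall_hasSoficApprox (QuotientGroup.mk' N) (fun g => ?_)
    (QuotientGroup.mk'_surjective N)
  rw [QuotientGroup.mk'_apply, QuotientGroup.eq_one_iff, ← SetLike.mem_coe, hNχ, mem_ofPred_eq]

/-- The set of codes of normal subgroups of `FreeGroup ℕ` with sofic quotient is a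
`Gδ` subset of the Cantor cube `FreeGroup ℕ → Bool`. -/
theorem isGdelta_sofic_quotient_codes :
    IsGδ {χ : FreeGroup ℕ → Bool |
      ∃ N : Subgroup (FreeGroup ℕ), ∃ hN : N.Normal,
        (N : Set (FreeGroup ℕ)) = {g : FreeGroup ℕ | χ g = true} ∧
        IsSofic (FreeGroup ℕ ⧸ N)} := by
  convert (isClosed_setOf_normal_subgroup_code (G := FreeGroup ℕ)).isGδ.inter <|
    .iInter fun E => .iInter fun n : ℕ => (isOpen_setOf_hasSoficApprox E (1 / (n + 1))).isGδ using 1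
  ext χ
  simp only [mem_inter_iff, mem_iInter, mem_ofPred_eq]
  constructor
  · rintro ⟨N, hN, hNχ, hsofic⟩
    exact ⟨⟨N, hN, hNχ⟩, (isSofic_quotient_iff_forall_hasSoficApprox hNχ).1 hsofic⟩
  · rintro ⟨⟨N, _, hNχ⟩, happrox⟩
    exact ⟨N, ‹_›, hNχ, (isSofic_quotient_iff_forall_hasSoficApprox hNχ).2 happrox⟩
end

section
/- Equip Bool with the discrete topology, FreeGroup ℕ → Bool with the product topology, and ℕ → Bool with the product topology. Then: (a) the set of all χ : FreeGroup ℕ → Bool such that some normal subgroup N of FreeGroup ℕ has underlying set {g | χ g = true} and the quotient group FreeGroup ℕ ⧸ N is finite, is an Fσ subset of FreeGroup ℕ → Bool; and (b) there exists a continuous map f : (ℕ → Bool) → (FreeGroup ℕ → Bool) such that for every α : ℕ → Bool the set {g | f α g = true} is the underlying set of a normal subgroup N_α of FreeGroup ℕ, and the quotient FreeGroup ℕ ⧸ N_α is finite if and only if the set {n : ℕ | α n = true} is finite. (Since the set of sequences with only finitely many values true is the canonical Σ⁰₂-complete subset of the Cantor space, (a) and (b) together say that finiteness of the quotient is Σ⁰₂-complete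 in this coding.) -/
/-!
(a) For a normal subgroup `N` coded by `χ`, the quotient is finite iff for some `n` every
`(n + 1)`-tuple of group elements contains two elements congruent modulo `N`. For fixed `n` this
condition, like being the code of a normal subgroup at all, is an intersection of conditions on
finitely many values of `χ`, hence closed.

(b) Send `α` to the kernel of the homomorphism `FreeGroup ℕ → (ℤ/2)^(ℕ)` mapping the generator `n`
to the `n`-th unit vector if `α n` holds and to `0` otherwise. Its image is `(ℤ/2)^(S)` for
`S = {n | α n}`, which is finite iff `S` is, and whether `g` lies in the kernel depends only on the
values of `α` at the generators occurring in `g`, so the reduction is continuous.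
-/

open Function

theorem finite_iff_exists_forall_not_injective_fin {α : Type*} :
    Finite α ↔ ∃ n, ∀ f : Fin (n + 1) → α, ¬Injective f := by
  constructor
  · intro _
    refine ⟨Nat.card α, fun f hf => ?_⟩
    simpa using Nat.card_le_card_of_injective f hf
  · rintro ⟨n, hn⟩
    by_contra hα
    rw [not_finite_iff_infinite] at hα
    exact hn _ ((Infinite.natEmbedding α).injective.comp Fin.val_injective)

theorem Subgroup.finite_quotient_iff_forall_fin_exists_inv_mul_mem {G : Type*} [Group G]
    (H : Subgroup G) :
    Finite (G ⧸ H) ↔ ∃ n, ∀ g : Fin (n + 1) → G, ∃ i j, (g i)⁻¹ * g j ∈ H ∧ i ≠ j := by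
  simp only [finite_iff_exists_forall_not_injective_fin,
    (QuotientGroup.mk_surjective.comp_left).forall, not_injective_iff, comp_apply,
    QuotientGroup.eq]

theorem isClopen_setOf_comp {X Y ι : Type*} [TopologicalSpace Y] [DiscreteTopology Y] [Finite ι]
    (t : ι → X) (P : (ι → Y) → Prop) : IsClopen {χ : X → Y | P (χ ∘ t)} :=
  (isClopen_discrete {v | P v}).preimage (continuous_pi fun i => continuous_apply (t i))

section Coding

variable (G : Type*) [Group G]

def normalSubgroupCodes : Set (G → Bool) :=
  {χ | ∃ N : Subgroup G, N.Normal ∧ (N : Set G) = {g | χ g = true}}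

def boundedIndexCodes (n : ℕ) : Set (G → Bool) :=
  {χ | ∀ g : Fin (n + 1) → G, ∃ i j, χ ((g i)⁻¹ * g j) = true ∧ i ≠ j}

variable {G}

theorem mem_normalSubgroupCodes_iff {χ : G → Bool} :
    χ ∈ normalSubgroupCodes G ↔ χ 1 = true ∧
      (∀ a b, χ a = true → χ b = true → χ (a * b⁻¹) = true) ∧
      ∀ a b, χ a = true → χ (b * a * b⁻¹) = true := by
  constructor
  · rintro ⟨N, hN, hχ⟩
    simp only [Set.ext_iff, SetLike.mem_coe, Set.mem_ofPred_eq] at hχ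
    simp only [← hχ]
    exact ⟨N.one_mem, fun a b ha hb => N.mul_mem ha (N.inv_mem hb),
      fun a b ha => hN.conj_mem a ha b⟩
  · rintro ⟨h1, hdiv, hconj⟩
    exact ⟨Subgroup.ofDiv {g | χ g = true} ⟨1, h1⟩ fun a ha b hb => hdiv a b ha hb,
      ⟨fun a ha b => hconj a b ha⟩, rfl⟩

theorem isClosed_normalSubgroupCodes : IsClosed (normalSubgroupCodes G) := by
  have hcodes : normalSubgroupCodes G = {χ | χ 1 = true} ∩
      (⋂ (a) (b), {χ | χ a = true → χ b = true → χ (a * b⁻¹) = true}) ∩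
      ⋂ (a) (b), {χ | χ a = true → χ (b * a * b⁻¹) = true} := by
    ext
    simp [mem_normalSubgroupCodes_iff, and_assoc]
  rw [hcodes]
  refine .inter (.inter ?_ ?_) ?_
  · exact (isClopen_setOf_comp ![1] fun v => v 0 = true).isClosed
  · exact isClosed_iInter fun a => isClosed_iInter fun b =>
      (isClopen_setOf_comp ![a, b, a * b⁻¹] fun v => v 0 = true → v 1 = true → v 2 = true).isClosed
  · exact isClosed_iInter fun a => isClosed_iInter fun b =>
      (isClopen_setOf_comp ![a, b * a * b⁻¹] fun v => v 0 = true → v 1 = true).isClosed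

theorem isClosed_boundedIndexCodes (n : ℕ) : IsClosed (boundedIndexCodes G n) := by
  simp only [boundedIndexCodes, Set.ofPred_forall]
  exact isClosed_iInter fun g =>
    (isClopen_setOf_comp (fun p : Fin (n + 1) × Fin (n + 1) => (g p.1)⁻¹ * g p.2)
      fun v => ∃ i j, v (i, j) = true ∧ i ≠ j).isClosed

theorem Subgroup.finite_quotient_iff_exists_mem_boundedIndexCodes {N : Subgroup G}
    {χ : G → Bool} (hχ : (N : Set G) = {g | χ g = true}) :
    Finite (G ⧸ N) ↔ ∃ n, χ ∈ boundedIndexCodes G n := by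
  simp_rw [N.finite_quotient_iff_forall_fin_exists_inv_mul_mem, ← SetLike.mem_coe, hχ]
  rfl

theorem setOf_finite_quotient_eq_iUnion :
    {χ : G → Bool | ∃ N : Subgroup G, N.Normal ∧ (N : Set G) = {g | χ g = true} ∧
      Finite (G ⧸ N)} = ⋃ n, normalSubgroupCodes G ∩ boundedIndexCodes G n := by
  ext χ
  simp only [Set.mem_iUnion, Set.mem_inter_iff]
  constructor
  · rintro ⟨N, hN, hχ, hfin⟩
    obtain ⟨n, hn⟩ := (Subgroup.finite_quotient_iff_exists_mem_boundedIndexCodes hχ).1 hfin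
    exact ⟨n, ⟨N, hN, hχ⟩, hn⟩
  · rintro ⟨n, ⟨N, hN, hχ⟩, hn⟩
    exact ⟨N, hN, hχ, (Subgroup.finite_quotient_iff_exists_mem_boundedIndexCodes hχ).2 ⟨n, hn⟩⟩

end Coding

theorem isLocallyConstant_freeGroupLift_apply {ι X H : Type*} [TopologicalSpace X] [Group H]
    {φ : X → ι → H} (hφ : ∀ i, IsLocallyConstant fun x => φ x i) (g : FreeGroup ι) :
    IsLocallyConstant fun x => FreeGroup.lift (φ x) g := by
  induction g using FreeGroup.induction_on with
  | C1 => simp_rw [map_one]; exact .const 1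
  | of i => simpa using hφ i
  | inv_of i hi => simp_rw [map_inv]; exact hi.comp (·⁻¹)
  | mul a b ha hb => simp_rw [map_mul]; exact ha.comp₂ hb (· * ·)

section Reduction

variable {ι : Type*}

noncomputable def maskedParity (α : ι → Bool) : FreeGroup ι →* Multiplicative (ι →₀ ZMod 2) :=
  FreeGroup.lift fun i => if α i then .ofAdd (Finsupp.single i 1) else 1

theorem maskedParity_of (α : ι → Bool) (i : ι) :
    maskedParity α (.of i) = if α i then .ofAdd (Finsupp.single i 1) else 1 :=
  FreeGroup.lift_apply_of

theorem maskedParity_apply_eq_zero {α : ι → Bool} {i : ι} (hi : α i = false) (g : FreeGroup ι) :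
    (maskedParity α g).toAdd i = 0 := by
  induction g using FreeGroup.induction_on with
  | C1 => rfl
  | of j =>
    rw [maskedParity_of]
    split_ifs with hj
    · exact Finsupp.single_eq_of_ne (by rintro rfl; simp_all)
    · rfl
  | inv_of j hj => simpa using hj
  | mul a b ha hb => simp [ha, hb]

theorem finite_quotient_ker_maskedParity_iff (α : ι → Bool) :
    Finite (FreeGroup ι ⧸ (maskedParity α).ker) ↔ {i | α i = true}.Finite := by
  rw [(QuotientGroup.quotientKerEquivRange _).toEquiv.finite_iff]
  constructor
  · intro hfin
    have hrange : (Set.range (maskedParity α)).Finite := by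
      rw [← MonoidHom.coe_range]
      exact Set.toFinite _
    refine Set.Finite.of_finite_image (f := fun i => maskedParity α (.of i))
      (hrange.subset (Set.image_subset_iff.2 fun i _ => ⟨_, rfl⟩)) fun i hi j hj hij => ?_
    simp only [maskedParity_of, show α i = true from hi, show α j = true from hj,
      if_true] at hij
    exact Finsupp.single_left_injective one_ne_zero (Multiplicative.ofAdd.injective hij)
  · intro hα
    have := hα.to_subtype
    refine Finite.of_injective (fun (x : (maskedParity α).range) (i : {i | α i = true}) =>
      x.1.toAdd i) ?_
    rintro ⟨x, g, rfl⟩ ⟨y, h, rfl⟩ hxy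
    ext1
    refine Multiplicative.toAdd.injective (Finsupp.ext fun i => ?_)
    cases hi : α i
    · rw [maskedParity_apply_eq_zero hi, maskedParity_apply_eq_zero hi]
    · exact congrFun hxy ⟨i, hi⟩

theorem isLocallyConstant_maskedParity_apply (g : FreeGroup ι) :
    IsLocallyConstant fun α => maskedParity α g :=
  isLocallyConstant_freeGroupLift_apply (fun i => ((IsLocallyConstant.iff_continuous _).2
    (continuous_apply i)).comp fun b : Bool =>
    if b then Multiplicative.ofAdd (Finsupp.single i (1 : ZMod 2)) else 1) g

theorem continuous_maskedParity_eq_one [DecidableEq ι] :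
    Continuous fun (α : ι → Bool) (g : FreeGroup ι) => decide (maskedParity α g = 1) :=
  continuous_pi fun g =>
    ((isLocallyConstant_maskedParity_apply g).comp fun v => decide (v = 1)).continuous

end Reduction

/-- (a) Finiteness of the quotient group is an `Fσ` class in the coding of countable
groups by normal subgroups of `FreeGroup ℕ`; (b) it is `Σ⁰₂`-hard: the canonical
`Σ⁰₂`-complete set of eventually-zero binary sequences continuously reduces to it. -/
theorem finite_quotient_sigma02_complete :
    (∃ A : ℕ → Set (FreeGroup ℕ → Bool), (∀ n, IsClosed (A n)) ∧
      {χ : FreeGroup ℕ → Bool |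
        ∃ N : Subgroup (FreeGroup ℕ), N.Normal ∧
          (N : Set (FreeGroup ℕ)) = {g : FreeGroup ℕ | χ g = true} ∧
          Finite (FreeGroup ℕ ⧸ N)} = ⋃ n, A n) ∧
    (∃ f : (ℕ → Bool) → (FreeGroup ℕ → Bool), Continuous f ∧
      ∀ α : ℕ → Bool, ∃ N : Subgroup (FreeGroup ℕ), N.Normal ∧
        (N : Set (FreeGroup ℕ)) = {g : FreeGroup ℕ | f α g = true} ∧
        (Finite (FreeGroup ℕ ⧸ N) ↔ {n : ℕ | α n = true}.Finite)) := by
  refine ⟨⟨fun n => normalSubgroupCodes _ ∩ boundedIndexCodes _ n,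
    fun n => isClosed_normalSubgroupCodes.inter (isClosed_boundedIndexCodes n),
    setOf_finite_quotient_eq_iUnion⟩,
    ⟨fun α g => decide (maskedParity α g = 1), continuous_maskedParity_eq_one,
      fun α => ⟨(maskedParity α).ker, inferInstance, ?_, finite_quotient_ker_maskedParity_iff α⟩⟩⟩
  ext g
  simp [MonoidHom.mem_ker]
end

section
/- Equip Bool with the discrete topology, (ℕ →₀ ℤ) → Bool with the product topology, and ℕ → Bool with the product topology. Then: (a) the set of all χ : (ℕ →₀ ℤ) → Bool such that some additive subgroup H of ℕ →₀ ℤ has underlying set {x | χ x = true} and the quotient group (ℕ →₀ ℤ) ⧸ H is a torsion group, is a Gδ subset of (ℕ →₀ ℤ) → Bool; and (b) there exists a continuous map f : (ℕ → Bool) → ((ℕ →₀ ℤ) → Bool) such that for every α : ℕ → Bool the set {x | f α x = true} is the underlying set of an additive subgroup H_α of ℕ →₀ ℤ, and the quotient (ℕ →₀ ℤ) ⧸ H_α is a torsion group if and only if the set {n : ℕ | α n = true} is infinite. (Since the set of sequences with infinitely many values true is the canonical Π⁰₂-complete subset of the Cantor space, (a) and (b) together say that being a torsion group is Π⁰₂-complete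 in this coding.) -/
/-!
(a) A code `χ` describes a subgroup iff it satisfies the conditions `χ 0` and
`χ x → χ y → χ (x - y)`, each involving finitely many coordinates, so these codes form a closed
set; the quotient is torsion iff every `x` has some multiple `(n + 1) • x` in the subgroup,
a countable intersection of open conditions.

(b) Send `α` to the subgroup of `ℕ →₀ ℤ` whose `k`-th coordinate ranges over `2 ^ i ℤ` for the
least `i > k` with `α i = true`, and over `0` if there is no such `i`. The quotient is a direct
sum of cyclic groups, torsion iff no coordinate subgroup is trivial, i.e. iff `α` is true at
arbitrarily large indices. Since `2 ^ i ∣ z ≠ 0` forces `i < |z|`, whether `x` lies in the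
subgroup depends on finitely many values of `α`, which makes the coding continuous.
-/

theorem isAddTorsion_quotient_iff {G : Type*} [AddCommGroup G] (H : AddSubgroup G) :
    IsAddTorsion (G ⧸ H) ↔ ∀ x : G, ∃ n : ℕ, 0 < n ∧ n • x ∈ H := by
  simp only [IsAddTorsion, QuotientAddGroup.mk_surjective.forall,
    isOfFinAddOrder_iff_nsmul_eq_zero, ← QuotientAddGroup.mk_nsmul, QuotientAddGroup.eq_zero_iff]

theorem exists_addSubgroup_coe_eq_iff {G : Type*} [AddGroup G] (χ : G → Bool) :
    (∃ H : AddSubgroup G, (H : Set G) = {x | χ x = true}) ↔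
      χ 0 = true ∧ ∀ x y, χ x = true → χ y = true → χ (x - y) = true := by
  constructor
  · rintro ⟨H, hH⟩
    have hmem (x : G) : χ x = true ↔ x ∈ H := (Set.ext_iff.1 hH x).symm
    simp only [hmem]
    exact ⟨H.zero_mem, fun x y => H.sub_mem⟩
  · rintro ⟨h0, hsub⟩
    refine ⟨AddSubgroup.ofSub {x | χ x = true} ⟨0, h0⟩ fun x hx y hy => ?_, rfl⟩
    simpa [sub_eq_add_neg] using hsub x y hx hy

theorem isClosed_setOf_exists_addSubgroup_coe_eq (G : Type*) [AddGroup G] :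
    IsClosed {χ : G → Bool | ∃ H : AddSubgroup G, (H : Set G) = {x | χ x = true}} := by
  simp only [exists_addSubgroup_coe_eq_iff, Set.ofPred_and, Set.ofPred_forall]
  refine ((isClosed_discrete {true}).preimage
    (by fun_prop : Continuous fun χ : G → Bool => χ 0)).inter
    (isClosed_iInter fun x => isClosed_iInter fun y => ?_)
  exact (isClosed_discrete {b : Bool × Bool × Bool | b.1 = true → b.2.1 = true → b.2.2 = true}
    ).preimage (by fun_prop : Continuous fun χ : G → Bool => (χ x, χ y, χ (x - y)))

theorem exists_addSubgroup_coe_eq_and_isAddTorsion_iff {G : Type*} [AddCommGroup G]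
    (χ : G → Bool) :
    (∃ H : AddSubgroup G, (H : Set G) = {x | χ x = true} ∧ IsAddTorsion (G ⧸ H)) ↔
      (∃ H : AddSubgroup G, (H : Set G) = {x | χ x = true}) ∧
        ∀ x, ∃ n : ℕ, χ ((n + 1) • x) = true := by
  constructor
  · rintro ⟨H, hH, htors⟩
    have hmem (x : G) : x ∈ H ↔ χ x = true := Set.ext_iff.1 hH x
    refine ⟨⟨H, hH⟩, fun x => ?_⟩
    obtain ⟨n, hn, hnx⟩ := (isAddTorsion_quotient_iff H).1 htors x
    obtain ⟨m, rfl⟩ := Nat.exists_eq_add_one_of_ne_zero hn.ne'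
    exact ⟨m, (hmem _).1 hnx⟩
  · rintro ⟨⟨H, hH⟩, htors⟩
    have hmem (x : G) : x ∈ H ↔ χ x = true := Set.ext_iff.1 hH x
    refine ⟨H, hH, (isAddTorsion_quotient_iff H).2 fun x => ?_⟩
    obtain ⟨n, hn⟩ := htors x
    exact ⟨n + 1, n.succ_pos, (hmem _).2 hn⟩

theorem isGδ_setOf_isAddTorsion_quotient (G : Type*) [AddCommGroup G] [Countable G] :
    IsGδ {χ : G → Bool | ∃ H : AddSubgroup G, (H : Set G) = {x | χ x = true} ∧
      IsAddTorsion (G ⧸ H)} := by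
  simp only [exists_addSubgroup_coe_eq_and_isAddTorsion_iff, Set.ofPred_and]
  refine (isClosed_setOf_exists_addSubgroup_coe_eq G).isGδ.inter ?_
  simp only [Set.ofPred_forall, Set.ofPred_exists]
  refine .iInter fun x => (isOpen_iUnion fun n => ?_).isGδ
  exact (isOpen_discrete {true}).preimage
    (by fun_prop : Continuous fun χ : G → Bool => χ ((n + 1) • x))

theorem DependsOn.isLocallyConstant {ι Y : Type*} {X : ι → Type*} [∀ i, TopologicalSpace (X i)]
    [∀ i, DiscreteTopology (X i)] {f : (Π i, X i) → Y} {s : Set ι} (hs : s.Finite)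
    (hf : DependsOn f s) : IsLocallyConstant f := by
  refine (IsLocallyConstant.iff_eventually_eq f).2 fun x => ?_
  have hnear : ∀ᶠ y in nhds x, ∀ i ∈ s, y i = x i :=
    (Filter.eventually_all_finite hs).2 fun i _ =>
      Filter.tendsto_pure.1 (by simpa only [nhds_discrete] using (continuous_apply i).tendsto x)
  exact hnear.mono fun y hy => hf hy

namespace Finsupp

variable {ι : Type*}

noncomputable def coordAddSubgroup (S : ι → AddSubgroup ℤ) : AddSubgroup (ι →₀ ℤ) :=
  ⨅ i, (S i).comap (applyAddHom i)

theorem mem_coordAddSubgroup {S : ι → AddSubgroup ℤ} {x : ι →₀ ℤ} :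
    x ∈ coordAddSubgroup S ↔ ∀ i, x i ∈ S i := by
  simp [coordAddSubgroup, AddSubgroup.mem_iInf]

theorem isAddTorsion_quotient_coordAddSubgroup_iff (S : ι → AddSubgroup ℤ) :
    IsAddTorsion ((ι →₀ ℤ) ⧸ coordAddSubgroup S) ↔ ∀ i, S i ≠ ⊥ := by
  simp only [isAddTorsion_quotient_iff, mem_coordAddSubgroup, ne_eq,
    AddSubgroup.eq_bot_iff_forall, not_forall]
  constructor
  · intro h i
    obtain ⟨n, hn, hmem⟩ := h (single i 1)
    exact ⟨n, by simpa using hmem i, by simpa using hn.ne'⟩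
  · intro h x
    choose m hmS hm0 using h
    refine ⟨∏ i ∈ x.support, (m i).natAbs, Finset.prod_pos fun i _ => Int.natAbs_pos.2 (hm0 i),
      fun i => ?_⟩
    have hdvd : m i ∣ (∏ i ∈ x.support, (m i).natAbs : ℕ) * x i := by
      by_cases hi : i ∈ x.support
      · refine Dvd.dvd.mul_right (Int.dvd_natCast.2 ?_) _
        exact (Int.natAbs_dvd_natAbs.2 dvd_rfl).trans (Finset.dvd_prod_of_mem _ hi)
      · simp [notMem_support_iff.1 hi]
    obtain ⟨c, hc⟩ := hdvd
    rw [smul_apply, ← natCast_zsmul, smul_eq_mul, hc, mul_comm, ← smul_eq_mul]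
    exact (S i).zsmul_mem (hmS i) c

end Finsupp

def dyadicTail (α : ℕ → Bool) (k : ℕ) : AddSubgroup ℤ where
  carrier := {z | z = 0 ∨ ∃ i, k < i ∧ α i = true ∧ 2 ^ i ∣ z}
  zero_mem' := Or.inl rfl
  add_mem' := by
    rintro a b (rfl | ⟨i, hki, hi, ha⟩) (rfl | ⟨j, hkj, hj, hb⟩)
    · exact Or.inl (add_zero 0)
    · exact Or.inr ⟨j, hkj, hj, by simpa using hb⟩
    · exact Or.inr ⟨i, hki, hi, by simpa using ha⟩
    · rcases le_total i j with hij | hji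
      · exact Or.inr ⟨i, hki, hi, dvd_add ha ((pow_dvd_pow 2 hij).trans hb)⟩
      · exact Or.inr ⟨j, hkj, hj, dvd_add ((pow_dvd_pow 2 hji).trans ha) hb⟩
  neg_mem' := by
    rintro a (rfl | ⟨i, hki, hi, ha⟩)
    · exact Or.inl neg_zero
    · exact Or.inr ⟨i, hki, hi, ha.neg_right⟩

theorem mem_dyadicTail {α : ℕ → Bool} {k : ℕ} {z : ℤ} :
    z ∈ dyadicTail α k ↔ z = 0 ∨ ∃ i, k < i ∧ α i = true ∧ 2 ^ i ∣ z :=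
  Iff.rfl

theorem dyadicTail_ne_bot_iff {α : ℕ → Bool} {k : ℕ} :
    dyadicTail α k ≠ ⊥ ↔ ∃ i, k < i ∧ α i = true := by
  simp only [ne_eq, AddSubgroup.eq_bot_iff_forall, mem_dyadicTail, not_forall]
  constructor
  · rintro ⟨z, (rfl | ⟨i, hki, hi, -⟩), hz⟩
    · exact absurd rfl hz
    · exact ⟨i, hki, hi⟩
  · rintro ⟨i, hki, hi⟩
    exact ⟨2 ^ i, Or.inr ⟨i, hki, hi, dvd_rfl⟩, by positivity⟩

theorem dependsOn_mem_dyadicTail (k : ℕ) (z : ℤ) :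
    DependsOn (fun α => z ∈ dyadicTail α k) (Set.Iio z.natAbs) := by
  suffices ∀ α β : ℕ → Bool, (∀ i < z.natAbs, α i = β i) →
      z ∈ dyadicTail α k → z ∈ dyadicTail β k from
    fun α β h => propext ⟨this α β h, this β α fun i hi => (h i hi).symm⟩
  rintro α β h (rfl | ⟨i, hki, hi, hdvd⟩)
  · exact Or.inl rfl
  by_cases hz : z = 0
  · exact Or.inl hz
  have hi_lt : i < z.natAbs :=
    (Nat.lt_two_pow_self).trans_le (Nat.le_of_dvd (Int.natAbs_pos.2 hz) (by
      simpa [Int.natAbs_pow] using Int.natAbs_dvd_natAbs.2 hdvd))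
  exact Or.inr ⟨i, hki, h i hi_lt ▸ hi, hdvd⟩

noncomputable def dyadicReduction (α : ℕ → Bool) : AddSubgroup (ℕ →₀ ℤ) :=
  Finsupp.coordAddSubgroup (dyadicTail α)

theorem isAddTorsion_quotient_dyadicReduction_iff (α : ℕ → Bool) :
    IsAddTorsion ((ℕ →₀ ℤ) ⧸ dyadicReduction α) ↔ {n | α n = true}.Infinite := by
  rw [dyadicReduction, Finsupp.isAddTorsion_quotient_coordAddSubgroup_iff,
    Set.infinite_iff_exists_gt]
  simp only [dyadicTail_ne_bot_iff, Set.mem_ofPred_eq, and_comm]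

theorem dependsOn_mem_dyadicReduction (x : ℕ →₀ ℤ) :
    DependsOn (fun α => x ∈ dyadicReduction α) (⋃ k ∈ x.support, Set.Iio (x k).natAbs) := by
  intro α β h
  simp only [dyadicReduction, Finsupp.mem_coordAddSubgroup]
  refine forall_congr fun k => dependsOn_mem_dyadicTail k (x k) fun i hi => h i ?_
  have hk : k ∈ x.support := Finsupp.mem_support_iff.2 fun hxk => by simp [hxk] at hi
  exact Set.mem_biUnion hk hi

open Classical in
noncomputable def dyadicCode (α : ℕ → Bool) (x : ℕ →₀ ℤ) : Bool :=
  decide (x ∈ dyadicReduction α)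

theorem coe_dyadicReduction (α : ℕ → Bool) :
    (dyadicReduction α : Set (ℕ →₀ ℤ)) = {x | dyadicCode α x = true} := by
  ext x
  simp [dyadicCode]

theorem continuous_dyadicCode : Continuous dyadicCode := by
  refine continuous_pi fun x => IsLocallyConstant.continuous ?_
  refine DependsOn.isLocallyConstant
    (x.support.finite_toSet.biUnion fun k _ => Set.finite_Iio (x k).natAbs) fun α β h => ?_
  simp only [dyadicCode, decide_eq_decide]
  exact Iff.of_eq (dependsOn_mem_dyadicReduction x h)

/-- (a) Being a torsion group is a `Gδ` class in the coding of countable abelian groups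
by subgroups of `ℕ →₀ ℤ`; (b) it is `Π⁰₂`-hard: the canonical `Π⁰₂`-complete set of
binary sequences with infinitely many `true` values continuously reduces to it. -/
theorem torsion_quotient_pi02_complete :
    (IsGδ {χ : (ℕ →₀ ℤ) → Bool |
      ∃ H : AddSubgroup (ℕ →₀ ℤ),
        (H : Set (ℕ →₀ ℤ)) = {x : ℕ →₀ ℤ | χ x = true} ∧
        AddMonoid.IsTorsion ((ℕ →₀ ℤ) ⧸ H)}) ∧
    (∃ f : (ℕ → Bool) → ((ℕ →₀ ℤ) → Bool), Continuous f ∧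
      ∀ α : ℕ → Bool, ∃ H : AddSubgroup (ℕ →₀ ℤ),
        (H : Set (ℕ →₀ ℤ)) = {x : ℕ →₀ ℤ | f α x = true} ∧
        (AddMonoid.IsTorsion ((ℕ →₀ ℤ) ⧸ H) ↔ {n : ℕ | α n = true}.Infinite)) :=
  ⟨isGδ_setOf_isAddTorsion_quotient (ℕ →₀ ℤ),
    dyadicCode, continuous_dyadicCode, fun α =>
      ⟨dyadicReduction α, coe_dyadicReduction α, isAddTorsion_quotient_dyadicReduction_iff α⟩⟩
end

section
/- Let B be a unital C*-algebra and let D ⊆ B be a dense subset. Then B contains a non-unitary isometry (an element w with w* w = 1 and w w* ≠ 1) if and only if there exists v ∈ D with ‖v* v − 1‖ < 1/4 and ‖v v* − 1‖ > 1/2. -/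
/-!
If `w` is a non-unitary isometry, `1 - w w*` is a non-zero projection, so `‖w w* - 1‖ = 1`; the
two strict inequalities cut out an open set containing `w`, which the dense set `D` meets.
Conversely, `‖v* v - 1‖ < 1` makes `v* v` invertible and `w = v (v* v)^(-1/2)` an isometry with
`v = w (v* v)^(1/2)`. Were `w` unitary, `v` would be invertible, so `v v* = v (v* v) v⁻¹` would
have the spectrum of `v* v`, and the self-adjoint elements `v v* - 1`, `v* v - 1` would have the
same norm, contradicting `1/4 < 1/2`.
-/

open CFC

theorem IsStarProjection.norm_eq_one {E : Type*} [NonUnitalNormedRing E] [StarRing E]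
    [CStarRing E] {e : E} (he : IsStarProjection e) (he₀ : e ≠ 0) : ‖e‖ = 1 := by
  have h : ‖e‖ * ‖e‖ = ‖e‖ := by
    rw [← CStarRing.norm_star_mul_self, he.isSelfAdjoint.star_eq, he.isIdempotentElem.eq]
  exact (mul_eq_right₀ (norm_ne_zero_iff.mpr he₀)).mp h

theorem isStarProjection_mul_star_of_star_mul_self_eq_one {R : Type*} [Semiring R] [StarRing R]
    {w : R} (hw : star w * w = 1) : IsStarProjection (w * star w) where
  isIdempotentElem := by
    rw [IsIdempotentElem, mul_assoc, ← mul_assoc (star w), hw, one_mul]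
  isSelfAdjoint := .mul_star_self w

theorem norm_mul_star_sub_one_of_star_mul_self_eq_one {E : Type*} [NormedRing E] [StarRing E]
    [CStarRing E] {w : E} (hw : star w * w = 1) (hw' : w * star w ≠ 1) :
    ‖w * star w - 1‖ = 1 := by
  rw [norm_sub_rev]
  exact (isStarProjection_mul_star_of_star_mul_self_eq_one hw).one_sub.norm_eq_one
    (sub_ne_zero.mpr hw'.symm)

theorem isUnit_of_norm_sub_one_lt_one {R : Type*} [NormedRing R] [HasSummableGeomSeries R]
    {a : R} (ha : ‖a - 1‖ < 1) : IsUnit a := by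
  simpa using isUnit_one_sub_of_norm_lt_one (x := 1 - a) (by rwa [norm_sub_rev])

section CStarAlgebra

variable {A : Type*} [CStarAlgebra A]

theorem exists_isometry_mul_isUnit_of_isUnit_star_mul_self {v : A}
    (hv : IsUnit (star v * v)) : ∃ w s : A, star w * w = 1 ∧ IsUnit s ∧ v = w * s := by
  let _ := CStarAlgebra.spectralOrder A
  let _ := CStarAlgebra.spectralOrderedRing A
  have hpos : IsStrictlyPositive (star v * v) := hv.isStrictlyPositive (star_mul_self_nonneg v)
  obtain ⟨u, hu⟩ := hpos.isUnit_cfcSqrt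
  have hu_star : star (↑u⁻¹ : A) = ↑u⁻¹ := by
    have hu_sa : star u = u := Units.ext <| by
      simpa [hu] using (sqrt_nonneg (star v * v)).isSelfAdjoint.star_eq
    rw [← Units.coe_star_inv, hu_sa]
  refine ⟨v * ↑u⁻¹, u, ?_, u.isUnit, by simp [mul_assoc]⟩
  calc star (v * ↑u⁻¹) * (v * ↑u⁻¹)
    _ = ↑u⁻¹ * (sqrt (star v * v) * sqrt (star v * v)) * ↑u⁻¹ := by
      rw [sqrt_mul_sqrt_self _ (star_mul_self_nonneg v), star_mul, hu_star]
      noncomm_ring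
    _ = 1 := by rw [← hu]; simp

theorem norm_mul_star_sub_one_eq_of_isUnit {v : A} (hv : IsUnit v) :
    ‖v * star v - 1‖ = ‖star v * v - 1‖ := by
  obtain ⟨u, rfl⟩ := hv
  have hconj : ↑u * star ↑u - 1 = ↑u * (star ↑u * ↑u - 1) * (↑u⁻¹ : A) := by
    simp [mul_sub, sub_mul, mul_assoc]
  have hspec :
      spectralRadius ℂ (↑u * star ↑u - 1 : A) = spectralRadius ℂ (star ↑u * ↑u - 1 : A) := by
    rw [spectralRadius, hconj, spectrum.units_conjugate, spectralRadius]
  rw [((IsSelfAdjoint.mul_star_self _).sub (.one A)).spectralRadius_eq_nnnorm,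
    ((IsSelfAdjoint.star_mul_self _).sub (.one A)).spectralRadius_eq_nnnorm] at hspec
  exact congrArg NNReal.toReal (by exact_mod_cast hspec)

end CStarAlgebra

/-- A unital C*-algebra contains a non-unitary isometry iff a dense subset contains an
approximate witness: `‖v*v - 1‖ < 1/4` and `‖vv* - 1‖ > 1/2`. -/
theorem nonunitary_isometry_iff_dense_witness {B : Type*} [NormedRing B] [StarRing B]
    [CStarRing B] [NormedAlgebra ℂ B] [StarModule ℂ B] [CompleteSpace B]
    (D : Set B) (hD : Dense D) :
    (∃ w : B, star w * w = 1 ∧ w * star w ≠ 1) ↔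
      ∃ v ∈ D, ‖star v * v - 1‖ < 1 / 4 ∧ 1 / 2 < ‖v * star v - 1‖ := by
  let _ : CStarAlgebra B := { ‹NormedRing B›, ‹StarRing B›, ‹CompleteSpace B›, ‹CStarRing B›,
    ‹NormedAlgebra ℂ B›, ‹StarModule ℂ B› with }
  constructor
  · rintro ⟨w, hw, hw'⟩
    have hopen : IsOpen {v : B | ‖star v * v - 1‖ < 1 / 4 ∧ 1 / 2 < ‖v * star v - 1‖} :=
      (isOpen_lt (f := fun v : B => ‖star v * v - 1‖) (by fun_prop) continuous_const).inter
        (isOpen_lt (g := fun v : B => ‖v * star v - 1‖) continuous_const (by fun_prop))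
    have hw_mem : ‖star w * w - 1‖ < 1 / 4 ∧ 1 / 2 < ‖w * star w - 1‖ := by
      rw [hw, norm_mul_star_sub_one_of_star_mul_self_eq_one hw hw']
      norm_num
    exact hD.exists_mem_open hopen ⟨w, hw_mem⟩
  · rintro ⟨v, -, hv₁, hv₂⟩
    obtain ⟨w, s, hw, hs, rfl⟩ := exists_isometry_mul_isUnit_of_isUnit_star_mul_self
      (isUnit_of_norm_sub_one_lt_one (hv₁.trans (by norm_num)))
    refine ⟨w, hw, fun hw' => ?_⟩
    have hw_unit : IsUnit w := ⟨⟨w, star w, hw', hw⟩, rfl⟩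
    have := norm_mul_star_sub_one_eq_of_isUnit (hw_unit.mul hs)
    linarith
end

section
/- Let M be an additive commutative monoid, G an additive commutative group, and ι : M →+ G an additive monoid homomorphism satisfying: (i) for all a, b ∈ M, ι a = ι b if and only if there exists c ∈ M with a + c = b + c; and (ii) every element of G has the form ι a − ι b for some a, b ∈ M (so ι is a Grothendieck group map of M). Let ν : ℕ → M be surjective. Write e_n for the standard generator single n 1 of the free abelian group ℕ →₀ ℤ, let π : (ℕ →₀ ℤ) →+ G be the unique additive homomorphism with π(e_n) = ι(ν n) for all n, and let H be the additive subgroup of ℕ →₀ ℤ generated by the set {e_n : ν n = 0} ∪ {e_m − e_n : ν m = ν n} ∪ {e_m + e_n − e_k : ν m + ν n = ν k}. Then π is surjective and the kernel of π equals H; in particular (ℕ →₀ ℤ) ⧸ H is isomorphic to G, the Grothendieck group of M. -/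
/-!
Every element of `ℕ →₀ ℤ` is congruent modulo `H` to a difference `e m - e n`: the addition
relations make this set of elements a subgroup, and it contains every generator. If such an
element lies in the kernel of `π`, then `ι (ν m) = ι (ν n)`, so `ν m + c = ν n + c` for some `c`,
and two addition relations through an index of `ν m + c` put `e m - e n` into `H`.
-/

open Finsupp

namespace GrothendieckPresentation

variable {α M : Type*} [AddCommMonoid M]

def relations (ν : α → M) : Set (α →₀ ℤ) :=
  {x | ∃ n, ν n = 0 ∧ x = single n 1} ∪
    {x | ∃ m n, ν m = ν n ∧ x = single m 1 - single n 1} ∪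
    {x | ∃ m n k, ν m + ν n = ν k ∧ x = single m 1 + single n 1 - single k 1}

theorem single_add_single_sub_single_mem_closure {ν : α → M} {m n k : α}
    (h : ν m + ν n = ν k) :
    single m 1 + single n 1 - single k 1 ∈ AddSubgroup.closure (relations ν) :=
  AddSubgroup.subset_closure (Or.inr ⟨m, n, k, h, rfl⟩)

section Quotient

variable {G : Type*} [AddCommGroup G] (ι : M →+ G) {ν : α → M} (π : (α →₀ ℤ) →+ G)
  (hπ : ∀ n, π (single n 1) = ι (ν n))
include hπ

theorem closure_relations_le_ker : AddSubgroup.closure (relations ν) ≤ π.ker := by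
  rw [AddSubgroup.closure_le]
  rintro x ((⟨n, h0, rfl⟩ | ⟨m, n, h, rfl⟩) | ⟨m, n, k, h, rfl⟩) <;>
    simp only [SetLike.mem_coe, AddMonoidHom.mem_ker, map_sub, map_add, hπ]
  · rw [h0, map_zero]
  · rw [h, sub_self]
  · rw [← map_add, h, sub_self]

theorem surjective_of_forall_eq_sub (hν : Function.Surjective ν)
    (hι : ∀ g : G, ∃ a b : M, g = ι a - ι b) : Function.Surjective π := by
  intro g
  obtain ⟨a, b, rfl⟩ := hι g
  obtain ⟨m, rfl⟩ := hν a
  obtain ⟨n, rfl⟩ := hν b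
  exact ⟨single m 1 - single n 1, by rw [map_sub, hπ, hπ]⟩

end Quotient

section AddRelations

variable {ν : α → M} (hν : Function.Surjective ν) {H : AddSubgroup (α →₀ ℤ)}
  (hadd : ∀ {m n k : α}, ν m + ν n = ν k → single m 1 + single n 1 - single k 1 ∈ H)
include hν hadd

theorem exists_sub_single_sub_single_mem (x : α →₀ ℤ) :
    ∃ m n, x - (single m 1 - single n 1) ∈ H := by
  obtain ⟨i, -⟩ := hν 0
  let K : AddSubgroup (α →₀ ℤ) :=
    { carrier := {x | ∃ m n, x - (single m 1 - single n 1) ∈ H}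
      zero_mem' := ⟨i, i, by simp⟩
      add_mem' := by
        rintro x y ⟨m, n, hx⟩ ⟨p, q, hy⟩
        obtain ⟨r, hr⟩ := hν (ν m + ν p)
        obtain ⟨s, hs⟩ := hν (ν n + ν q)
        refine ⟨r, s, ?_⟩
        convert H.add_mem (H.add_mem hx hy) (H.sub_mem (hadd hr.symm) (hadd hs.symm)) using 1
        abel
      neg_mem' := by
        rintro x ⟨m, n, hx⟩
        refine ⟨n, m, ?_⟩
        convert H.neg_mem hx using 1
        abel }
  have hsingle : ∀ a, single a 1 ∈ K := fun a => by
    obtain ⟨m, hm⟩ := hν (ν i + ν a)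
    refine ⟨m, i, ?_⟩
    convert hadd hm.symm using 1
    abel
  exact (x.sum_single ▸
    K.sum_mem fun a _ => smul_single_one a (x a) ▸ K.zsmul_mem (hsingle a) (x a) : x ∈ K)

theorem single_sub_single_mem_of_add_eq {m n : α} {c : M} (h : ν m + c = ν n + c) :
    single m 1 - single n 1 ∈ H := by
  obtain ⟨k, rfl⟩ := hν c
  obtain ⟨j, hj⟩ := hν (ν m + ν k)
  convert H.sub_mem (hadd hj.symm) (hadd (h ▸ hj).symm) using 1
  abel

theorem ker_le {G : Type*} [AddCommGroup G] (ι : M →+ G)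
    (hι : ∀ a b : M, ι a = ι b → ∃ c : M, a + c = b + c) (π : (α →₀ ℤ) →+ G)
    (hπ : ∀ n, π (single n 1) = ι (ν n)) (hH : H ≤ π.ker) : π.ker ≤ H := by
  intro x hx
  obtain ⟨m, n, hmn⟩ := exists_sub_single_sub_single_mem hν hadd x
  have hπmn : ι (ν m) = ι (ν n) := by
    have := hH hmn
    rwa [AddMonoidHom.mem_ker, map_sub, hx, zero_sub, neg_eq_zero, map_sub, hπ, hπ,
      sub_eq_zero] at this
  obtain ⟨c, hc⟩ := hι _ _ hπmn
  simpa using H.add_mem hmn (single_sub_single_mem_of_add_eq hν hadd hc)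

end AddRelations

end GrothendieckPresentation

open GrothendieckPresentation in
/-- Presenting the Grothendieck group of a commutative monoid from countable semigroup
data: if `ι : M →+ G` is a Grothendieck group map, `ν : ℕ → M` is surjective,
`π : (ℕ →₀ ℤ) →+ G` sends the standard generator `e_n` to `ι (ν n)`, and `H` is the
subgroup generated by the zero-, equality-, and addition-relations, then `π` is
surjective with kernel `H`; in particular `(ℕ →₀ ℤ) ⧸ H ≅ G`. -/
theorem grothendieck_presentation {M : Type*} [AddCommMonoid M]
    {G : Type*} [AddCommGroup G] (ι : M →+ G)
    (hι₁ : ∀ a b : M, ι a = ι b ↔ ∃ c : M, a + c = b + c)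
    (hι₂ : ∀ g : G, ∃ a b : M, g = ι a - ι b)
    (ν : ℕ → M) (hν : Function.Surjective ν)
    (π : (ℕ →₀ ℤ) →+ G) (hπ : ∀ n : ℕ, π (Finsupp.single n 1) = ι (ν n))
    (H : AddSubgroup (ℕ →₀ ℤ))
    (hH : H = AddSubgroup.closure
      ({x : ℕ →₀ ℤ | ∃ n, ν n = 0 ∧ x = Finsupp.single n 1} ∪
       {x : ℕ →₀ ℤ | ∃ m n, ν m = ν n ∧
          x = Finsupp.single m 1 - Finsupp.single n 1} ∪
       {x : ℕ →₀ ℤ | ∃ m n k, ν m + ν n = ν k ∧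
          x = Finsupp.single m 1 + Finsupp.single n 1 - Finsupp.single k 1})) :
    Function.Surjective π ∧ π.ker = H ∧ Nonempty (((ℕ →₀ ℤ) ⧸ H) ≃+ G) := by
  change H = AddSubgroup.closure (relations ν) at hH
  subst hH
  have hsurj := surjective_of_forall_eq_sub ι π hπ hν hι₂
  have hker : π.ker = AddSubgroup.closure (relations ν) :=
    le_antisymm
      (ker_le hν single_add_single_sub_single_mem_closure ι (fun a b => (hι₁ a b).mp) π hπ
        (closure_relations_le_ker ι π hπ))
      (closure_relations_le_ker ι π hπ)
  exact ⟨hsurj, hker, ⟨hker ▸ QuotientAddGroup.quotientKerEquivOfSurjective π hsurj⟩⟩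
end
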